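/- arXiv:2507.00471 — 2 statements merged into one kernel-verified Lean document; each statement's English description precedes it below -/
import Mathlib

section
/- For every r > 0 one has (1 − f′(r)²)/f(r)² − f′(r)·G′(r)/(f(r)·G(r)) > 0, where f(r) = r·(1+r²)^(−1/4) and G(r) = r/arctan r. -/
/-!
Write `v = (1 + r²)^(-1/4) ∈ (0, 1)`, so that `f = r v`, `f′ = v (1 + v⁴) / 2` and `r² v⁴ = 1 - v⁴`.
Since `arctan r < r`, the logarithmic derivative `G′/G = 1/r - 1/((1 + r²) arctan r)` is smaller
than `r/(1 + r²)`, and as `f f′ > 0` the quantity in question is at least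
`(1 - f′² - f f′ r/(1 + r²)) / f²`. In terms of `s = v²` that numerator is the polynomial
`(1 - s)(4 + s + s² - s³ - s⁴) / 4`, which is positive on `(0, 1)`.
-/

noncomputable def f (r : ℝ) : ℝ := r * (1 + r ^ 2) ^ (-(1 / 4 : ℝ))

noncomputable def G (r : ℝ) : ℝ := r / Real.arctan r

open Real

lemma Real.arctan_lt_self {r : ℝ} (hr : 0 < r) : arctan r < r := by
  simpa only [tan_arctan] using lt_tan (arctan_pos.2 hr) (arctan_lt_pi_div_two r)

lemma rpow_neg_quarter_pow_four_mul_self {u : ℝ} (hu : 0 < u) :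
    (u ^ (-(1 / 4 : ℝ))) ^ 4 * u = 1 := by
  rw [← rpow_natCast, ← rpow_mul hu.le]
  norm_num [rpow_neg_one, hu.ne']

lemma hasDerivAt_f (r : ℝ) :
    HasDerivAt f ((1 + r ^ 2) ^ (-(1 / 4 : ℝ)) * (1 + ((1 + r ^ 2) ^ (-(1 / 4 : ℝ))) ^ 4) / 2) r := by
  have hu : 0 < 1 + r ^ 2 := by positivity
  have hpow := ((hasDerivAt_pow 2 r).const_add 1).rpow_const (p := -(1 / 4 : ℝ)) (Or.inl hu.ne')
  refine ((hasDerivAt_id' r).mul hpow).congr_deriv ?_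
  have hv4 := rpow_neg_quarter_pow_four_mul_self hu
  rw [rpow_sub_one hu.ne']
  generalize (1 + r ^ 2) ^ (-(1 / 4 : ℝ)) = v at hv4 ⊢
  field_simp
  linear_combination (-4 * v) * hv4

lemma deriv_G_div_G_lt {r : ℝ} (hr : 0 < r) : deriv G r / G r < r / (1 + r ^ 2) := by
  have hA := arctan_pos.2 hr
  have hG : HasDerivAt G ((1 * arctan r - r * (1 / (1 + r ^ 2))) / arctan r ^ 2) r :=
    (hasDerivAt_id r).div (hasDerivAt_arctan r) hA.ne'
  have hlog : deriv G r / G r = 1 / r - 1 / ((1 + r ^ 2) * arctan r) := by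
    rw [hG.deriv, G]
    field_simp
  rw [hlog]
  calc 1 / r - 1 / ((1 + r ^ 2) * arctan r)
      < 1 / r - 1 / ((1 + r ^ 2) * r) := by
        gcongr 1 / r - ?_
        exact one_div_lt_one_div_of_lt (by positivity) (by gcongr; exact arctan_lt_self hr)
    _ = r / (1 + r ^ 2) := by field_simp; ring

lemma four_sub_three_mul_sub_two_mul_pow_three_add_pow_five_pos {s : ℝ} (hs0 : 0 ≤ s) (hs1 : s < 1) :
    0 < 4 - 3 * s - 2 * s ^ 3 + s ^ 5 := by
  have hquartic : 0 < 4 + s + s ^ 2 - s ^ 3 - s ^ 4 := by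
    nlinarith [pow_le_pow_of_le_one hs0 hs1.le (show 1 ≤ 3 by norm_num),
      pow_le_pow_of_le_one hs0 hs1.le (show 2 ≤ 4 by norm_num)]
  have hfactor : 4 - 3 * s - 2 * s ^ 3 + s ^ 5 = (1 - s) * (4 + s + s ^ 2 - s ^ 3 - s ^ 4) := by ring
  rw [hfactor]
  exact mul_pos (sub_pos.2 hs1) hquartic

lemma f_pos {r : ℝ} (hr : 0 < r) : 0 < f r := by
  unfold f
  positivity

lemma f_mul_deriv_f_pos {r : ℝ} (hr : 0 < r) : 0 < f r * deriv f r := by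
  rw [(hasDerivAt_f r).deriv]
  exact mul_pos (f_pos hr) (by positivity)

lemma one_sub_deriv_f_sq_sub_pos {r : ℝ} (hr : 0 < r) :
    0 < 1 - deriv f r ^ 2 - f r * deriv f r * (r / (1 + r ^ 2)) := by
  have hu : 0 < 1 + r ^ 2 := by positivity
  have hv4 := rpow_neg_quarter_pow_four_mul_self hu
  have hv0 : 0 < (1 + r ^ 2) ^ (-(1 / 4 : ℝ)) := rpow_pos_of_pos hu _
  have hv1 : (1 + r ^ 2) ^ (-(1 / 4 : ℝ)) < 1 :=
    rpow_lt_one_of_one_lt_of_neg (by nlinarith) (by norm_num)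
  rw [(hasDerivAt_f r).deriv, f]
  generalize (1 + r ^ 2) ^ (-(1 / 4 : ℝ)) = v at *
  have hfactor : r * v * (v * (1 + v ^ 4) / 2) * (r / (1 + r ^ 2)) = v ^ 2 * (1 - v ^ 8) / 2 := by
    field_simp
    linear_combination (1 + v ^ 4) * hv4
  have hpoly := four_sub_three_mul_sub_two_mul_pow_three_add_pow_five_pos (sq_nonneg v)
    (by nlinarith : v ^ 2 < 1)
  rw [hfactor]
  linear_combination hpoly / 4

/-- For `f(r) = r·(1+r²)^{-1/4}` and `G(r) = r/arctan r`:
`(1 − (f′)²)/f² − f′G′/(fG) > 0` for all `r > 0`. -/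
theorem statement8 :
    ∀ r : ℝ, 0 < r →
      (1 - (deriv f r) ^ 2) / (f r) ^ 2
        - deriv f r * deriv G r / (f r * G r) > 0 := by
  intro r hr
  have hf : f r ≠ 0 := (f_pos hr).ne'
  have hG : G r ≠ 0 := (div_pos hr (arctan_pos.2 hr)).ne'
  have hsplit : (1 - deriv f r ^ 2) / f r ^ 2 - deriv f r * deriv G r / (f r * G r)
      = (1 - deriv f r ^ 2 - f r * deriv f r * (deriv G r / G r)) / f r ^ 2 := by
    field_simp
  rw [hsplit, gt_iff_lt]
  refine div_pos ?_ (by positivity)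
  linarith [mul_lt_mul_of_pos_left (deriv_G_div_G_lt hr) (f_mul_deriv_f_pos hr),
    one_sub_deriv_f_sq_sub_pos hr]
end

section
/- For every r > 0 one has 0 ≤ G′(r) and (π/2)·G′(r) < 1, where G(r) = r/arctan r. Consequently, for every constant c ∈ (0,1), the function g(r) = (π/2)·c·G(r) satisfies 0 ≤ g′(r) < c for all r > 0. -/
/-!
With `A = arctan r` one has `r / (1 + r²) = sin A cos A = sin (2A) / 2` and
`G′(r) = (A - sin (2A) / 2) / A²`. Positivity of `G′` is `sin s < s`, and `(π/2) G′(r) < 1`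
becomes, for `s = 2A ∈ (0, π)`, the parabola bound `s (π - s) < π sin s`.
-/

open Real

/-- On `(0, π/2]` the cubic Taylor bound `s - s³/6 < sin s` suffices, since `π s ≤ π²/2 < 6`. -/
lemma mul_pi_sub_lt_pi_mul_sin_of_le_pi_div_two {s : ℝ} (hs : 0 < s) (hs' : s ≤ π / 2) :
    s * (π - s) < π * sin s := by
  have hsin := sin_gt_sub_cube hs
  have hπs : π * s ≤ 6 := by nlinarith [pi_lt_d2]
  nlinarith [pi_pos, mul_le_mul_of_nonneg_left hπs (sq_nonneg s)]

lemma mul_pi_sub_lt_pi_mul_sin {s : ℝ} (hs : 0 < s) (hs' : s < π) :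
    s * (π - s) < π * sin s := by
  rcases le_or_gt s (π / 2) with h | h
  · exact mul_pi_sub_lt_pi_mul_sin_of_le_pi_div_two hs h
  · have := mul_pi_sub_lt_pi_mul_sin_of_le_pi_div_two (s := π - s) (by linarith) (by linarith)
    rwa [sin_pi_sub, sub_sub_cancel, mul_comm] at this

lemma sin_two_mul_arctan (x : ℝ) : sin (2 * arctan x) = 2 * (x / (1 + x ^ 2)) := by
  have h : (0 : ℝ) < 1 + x ^ 2 := by positivity
  rw [sin_two_mul, sin_arctan, cos_arctan]
  field_simp
  rw [sq_sqrt h.le]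

lemma div_one_add_sq_lt_arctan {x : ℝ} (hx : 0 < x) : x / (1 + x ^ 2) < arctan x := by
  have := sin_lt (mul_pos two_pos (arctan_pos.2 hx))
  rw [sin_two_mul_arctan] at this
  linarith

lemma arctan_mul_pi_div_two_sub_arctan_lt {x : ℝ} (hx : 0 < x) :
    arctan x * (π / 2 - arctan x) < π / 2 * (x / (1 + x ^ 2)) := by
  have h := mul_pi_sub_lt_pi_mul_sin (s := 2 * arctan x)
    (mul_pos two_pos (arctan_pos.2 hx)) (by linarith [arctan_lt_pi_div_two x])
  rw [sin_two_mul_arctan] at h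
  linarith

lemma hasDerivAt_G {r : ℝ} (hr : 0 < r) :
    HasDerivAt G ((arctan r - r / (1 + r ^ 2)) / arctan r ^ 2) r := by
  refine ((hasDerivAt_id r).div (hasDerivAt_arctan r) (arctan_pos.2 hr).ne').congr_deriv ?_
  simp only [id]
  ring

lemma deriv_G_pos {r : ℝ} (hr : 0 < r) : 0 < deriv G r := by
  rw [(hasDerivAt_G hr).deriv]
  have := div_one_add_sq_lt_arctan hr
  have := arctan_pos.2 hr
  exact div_pos (by linarith) (by positivity)

lemma pi_div_two_mul_deriv_G_lt_one {r : ℝ} (hr : 0 < r) : π / 2 * deriv G r < 1 := by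
  have hA := arctan_pos.2 hr
  rw [(hasDerivAt_G hr).deriv, mul_div_assoc', div_lt_one (by positivity)]
  nlinarith [arctan_mul_pi_div_two_sub_arctan_lt hr]

/-- For `G(r) = r/arctan r`: `0 ≤ G′(r)` and `(π/2)·G′(r) < 1` for all `r > 0`;
consequently, for every `c ∈ (0,1)`, the function `g(r) = (π/2)·c·G(r)` satisfies
`0 ≤ g′(r) < c` for all `r > 0`. -/
theorem statement9 :
    (∀ r : ℝ, 0 < r → 0 ≤ deriv G r ∧ (Real.pi / 2) * deriv G r < 1) ∧
    (∀ c : ℝ, c ∈ Set.Ioo (0 : ℝ) 1 → ∀ r : ℝ, 0 < r →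
      0 ≤ deriv (fun s => (Real.pi / 2) * c * G s) r ∧
      deriv (fun s => (Real.pi / 2) * c * G s) r < c) := by
  refine ⟨fun r hr => ⟨(deriv_G_pos hr).le, pi_div_two_mul_deriv_G_lt_one hr⟩, ?_⟩
  rintro c ⟨hc, -⟩ r hr
  rw [deriv_const_mul _ (hasDerivAt_G hr).differentiableAt]
  have hpos := deriv_G_pos hr
  have hlt := pi_div_two_mul_deriv_G_lt_one hr
  constructor
  · positivity
  · nlinarith
end
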